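/- arXiv:2601.15105 — 4 statements merged into one kernel-verified Lean document; each statement's English description precedes it below -/
import Mathlib

section
/- Let F : S¹ → S¹ be a C¹ expanding map (|DF| ≥ λ > 1 everywhere), let v : S¹ → ℝ be continuous, and let β > 0. Then there exists a unique bounded function α : S¹ → ℝ satisfying v(x) = α(F(x)) − (DF(x))^β · α(x) for all x, and it is given by the uniformly convergent series α(x) = Σ_{k=0}^∞ (−v(F^k(x))) / Π_{j=0}^{k} (DF(F^j(x)))^β. -/
open Filter

/-- For a `C¹` expanding circle map `F` (modelled by a lift
`F : ℝ → ℝ` of a degree-`d` circle map, with derivative `DF ≥ λ > 1`), a continuous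
(1-periodic) `v` and `β > 0`, there is a unique bounded `α` solving the twisted
cohomological equation `v = α∘F − (DF)^β α`, given by the uniformly convergent series
`α(x) = Σ_{k≥0} (−v(F^k x)) / Π_{j=0}^{k} (DF(F^j x))^β`. -/
theorem stmt0
    (F : ℝ → ℝ) (DF : ℝ → ℝ) (hF : ∀ x, HasDerivAt F (DF x) x)
    (hDFc : Continuous DF) (lam : ℝ) (hlam : 1 < lam)
    (hexp : ∀ x, lam ≤ DF x)
    (hdeg : ∃ d : ℤ, ∀ x, F (x + 1) = F x + d)
    (v : ℝ → ℝ) (hv : Continuous v) (hvper : ∀ x, v (x + 1) = v x)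
    (β : ℝ) (hβ : 0 < β) :
    ∃ α : ℝ → ℝ,
      ((∃ M : ℝ, ∀ x, |α x| ≤ M) ∧ ∀ x, v x = α (F x) - DF x ^ β * α x) ∧
      (∀ α' : ℝ → ℝ,
        ((∃ M : ℝ, ∀ x, |α' x| ≤ M) ∧ ∀ x, v x = α' (F x) - DF x ^ β * α' x) →
        α' = α) ∧
      TendstoUniformly
        (fun N x => ∑ k ∈ Finset.range N,
          (-(v (F^[k] x))) / ∏ j ∈ Finset.range (k + 1), DF (F^[j] x) ^ β)
        α atTop := by
  have hlam0 : (0:ℝ) < lam := lt_trans one_pos hlam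
  -- v is bounded
  obtain ⟨M, hMv'⟩ := (isCompact_Icc (a := (0:ℝ)) (b := 1)).exists_bound_of_continuousOn
    hv.continuousOn
  have hper : Function.Periodic v 1 := hvper
  have hMv : ∀ x, |v x| ≤ M := by
    intro x
    have h1 : v x = v (Int.fract x) := by
      have := hper.sub_int_mul_eq (x := x) ⌊x⌋
      rw [mul_one] at this
      rw [Int.fract, this]
    rw [h1]
    exact hMv' _ ⟨Int.fract_nonneg x, (Int.fract_lt_one x).le⟩
  have hM0 : 0 ≤ M := le_trans (abs_nonneg _) (hMv 0)
  -- basic positivity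
  set q := lam ^ β with hq
  have hq1 : 1 < q := Real.one_lt_rpow_iff_of_pos hlam0 |>.mpr (Or.inl ⟨hlam, hβ⟩)
  have hq0 : 0 < q := lt_trans one_pos hq1
  have hDFpos : ∀ x, 0 < DF x := fun x => lt_of_lt_of_le hlam0 (hexp x)
  have hgpos : ∀ x j, 0 < DF (F^[j] x) ^ β := fun x j =>
    Real.rpow_pos_of_pos (hDFpos _) β
  have hgq : ∀ x j, q ≤ DF (F^[j] x) ^ β := fun x j =>
    Real.rpow_le_rpow hlam0.le (hexp _) hβ.le
  set f : ℕ → ℝ → ℝ := fun k x =>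
    (-(v (F^[k] x))) / ∏ j ∈ Finset.range (k + 1), DF (F^[j] x) ^ β with hf
  have hprodpos : ∀ x n, 0 < ∏ j ∈ Finset.range n, DF (F^[j] x) ^ β := fun x n =>
    Finset.prod_pos (fun j _ => hgpos x j)
  have hprodge : ∀ x n, q ^ n ≤ ∏ j ∈ Finset.range n, DF (F^[j] x) ^ β := by
    intro x n
    calc q ^ n = ∏ _j ∈ Finset.range n, q := by
          rw [Finset.prod_const, Finset.card_range]
      _ ≤ _ := Finset.prod_le_prod (fun j _ => hq0.le) (fun j _ => hgq x j)
  set u : ℕ → ℝ := fun k => M * q⁻¹ ^ (k + 1) with hu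
  have hrlt : q⁻¹ < 1 := inv_lt_one_of_one_lt₀ hq1
  have hr0 : (0:ℝ) ≤ q⁻¹ := inv_nonneg.mpr hq0.le
  have hsumu : Summable u := by
    have : Summable (fun k : ℕ => q⁻¹ ^ k) := summable_geometric_of_lt_one hr0 hrlt
    simpa [hu, pow_succ, mul_comm, mul_left_comm, mul_assoc] using
      (this.mul_left (M * q⁻¹))
  have hbound : ∀ k x, ‖f k x‖ ≤ u k := by
    intro k x
    have h1 : |(-(v (F^[k] x)))| ≤ M := by rw [abs_neg]; exact hMv _
    have h2 : q ^ (k + 1) ≤ ∏ j ∈ Finset.range (k + 1), DF (F^[j] x) ^ β :=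
      hprodge x (k + 1)
    have h3 : |f k x| ≤ M / q ^ (k + 1) := by
      rw [hf, abs_div, abs_of_pos (hprodpos x (k + 1))]
      exact div_le_div₀ hM0 h1 (pow_pos hq0 _) h2
    calc ‖f k x‖ ≤ M / q ^ (k + 1) := h3
      _ = u k := by rw [hu, div_eq_mul_inv, ← inv_pow]
  have hsumf : ∀ x, Summable (fun k => f k x) := fun x =>
    Summable.of_norm_bounded hsumu (fun k => hbound k x)
  set α : ℝ → ℝ := fun x => ∑' k, f k x with hα
  -- α is bounded
  have hαb : ∀ x, |α x| ≤ ∑' k, u k := by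
    intro x
    calc |α x| = ‖∑' k, f k x‖ := rfl
      _ ≤ ∑' k, ‖f k x‖ := norm_tsum_le_tsum_norm
          (hsumu.of_nonneg_of_le (fun k => norm_nonneg _) (fun k => hbound k x))
      _ ≤ ∑' k, u k := Summable.tsum_le_tsum (fun k => hbound k x)
          (hsumu.of_nonneg_of_le (fun k => norm_nonneg _) (fun k => hbound k x)) hsumu
  -- key shift identity
  have hkey : ∀ x k, f k (F x) = DF x ^ β * f (k + 1) x := by
    intro x k
    have hDFx : (0:ℝ) < DF x ^ β := Real.rpow_pos_of_pos (hDFpos x) β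
    have hP : (0:ℝ) < ∏ j ∈ Finset.range (k + 1), DF (F^[j] (F x)) ^ β :=
      hprodpos (F x) (k + 1)
    have hsplit : ∏ j ∈ Finset.range (k + 2), DF (F^[j] x) ^ β
        = (∏ j ∈ Finset.range (k + 1), DF (F^[j] (F x)) ^ β) * DF x ^ β := by
      rw [Finset.prod_range_succ']
      simp [Function.iterate_succ_apply]
    simp only [hf]
    rw [Function.iterate_succ_apply F k x, hsplit]
    rw [mul_comm (∏ j ∈ Finset.range (k + 1), DF (F^[j] (F x)) ^ β) (DF x ^ β),
      ← mul_div_assoc, mul_div_mul_left _ _ hDFx.ne']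
  -- the cohomological equation
  have heq : ∀ x, v x = α (F x) - DF x ^ β * α x := by
    intro x
    have hDFx : (0:ℝ) < DF x ^ β := Real.rpow_pos_of_pos (hDFpos x) β
    have hshift : α (F x) = DF x ^ β * ∑' k, f (k + 1) x := by
      rw [hα]
      simp only [hkey x]
      exact tsum_mul_left
    have hzero : α x = f 0 x + ∑' k, f (k + 1) x := Summable.tsum_eq_zero_add (hsumf x)
    have hf0 : f 0 x = -v x / DF x ^ β := by
      simp [hf]
    have : α (F x) = DF x ^ β * (α x - f 0 x) := by
      rw [hshift, hzero]; ring
    rw [this, hf0]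
    field_simp
    ring
  refine ⟨α, ⟨⟨∑' k, u k, hαb⟩, heq⟩, ?_, ?_⟩
  · -- uniqueness
    rintro α' ⟨⟨M', hM'⟩, heq'⟩
    funext x
    set δ : ℝ → ℝ := fun y => α' y - α y with hδ
    have hstep : ∀ y, δ (F y) = DF y ^ β * δ y := by
      intro y
      have := heq' y
      have h2 := heq y
      simp only [hδ]
      nlinarith [heq' y, heq y]
    have hiterδ : ∀ n, δ (F^[n] x) = (∏ j ∈ Finset.range n, DF (F^[j] x) ^ β) * δ x := by
      intro n
      induction n with
      | zero => simp
      | succ n ih =>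
        rw [Function.iterate_succ_apply', hstep, ih, Finset.prod_range_succ]
        ring
    have hδb : ∀ y, |δ y| ≤ M' + ∑' k, u k := by
      intro y
      calc |δ y| ≤ |α' y| + |α y| := abs_sub _ _
        _ ≤ M' + ∑' k, u k := add_le_add (hM' y) (hαb y)
    have hbd : ∀ n : ℕ, |δ x| ≤ (M' + ∑' k, u k) * q⁻¹ ^ n := by
      intro n
      have hP := hprodpos x n
      have hPq := hprodge x n
      have h1 : |δ x| = |δ (F^[n] x)| / ∏ j ∈ Finset.range n, DF (F^[j] x) ^ β := by
        rw [hiterδ n, abs_mul, abs_of_pos hP, mul_comm, mul_div_assoc,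
          div_self hP.ne', mul_one]
      rw [h1]
      calc |δ (F^[n] x)| / ∏ j ∈ Finset.range n, DF (F^[j] x) ^ β
          ≤ (M' + ∑' k, u k) / q ^ n :=
            div_le_div₀ (le_trans (abs_nonneg _) (hδb x)) (hδb _) (pow_pos hq0 n) hPq
        _ = (M' + ∑' k, u k) * q⁻¹ ^ n := by rw [div_eq_mul_inv, inv_pow]
    have htend : Tendsto (fun n : ℕ => (M' + ∑' k, u k) * q⁻¹ ^ n) atTop (nhds 0) := by
      simpa using (tendsto_pow_atTop_nhds_zero_of_lt_one hr0 hrlt).const_mul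
        (M' + ∑' k, u k)
    have : |δ x| ≤ 0 := ge_of_tendsto' htend hbd
    have : δ x = 0 := abs_eq_zero.mp (le_antisymm this (abs_nonneg _))
    simpa [hδ, sub_eq_zero] using this
  · -- uniform convergence
    exact tendstoUniformly_tsum_nat hsumu hbound
end

section
/- Let 0 < a < 1 and let b ≥ 2 be an integer with ab > 1. Then the Weierstrass function W(x) = Σ_{k=0}^∞ a^k cos(b^k π x) is Hölder continuous with exponent −log a / log b, i.e. there is C > 0 with |W(x) − W(y)| ≤ C |x − y|^{−log a / log b} for all real x, y. -/
open Real Finset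

lemma abs_cos_sub_cos' (u v : ℝ) : |Real.cos u - Real.cos v| ≤ |u - v| := by
  rw [Real.cos_sub_cos, abs_mul, abs_mul]
  have h1 : |Real.sin ((u + v) / 2)| ≤ 1 := Real.abs_sin_le_one _
  have h2 : |Real.sin ((u - v) / 2)| ≤ |(u - v) / 2| := Real.abs_sin_le_abs
  calc |(-2 : ℝ)| * |Real.sin ((u + v) / 2)| * |Real.sin ((u - v) / 2)|
      ≤ 2 * 1 * |(u - v) / 2| := by
        apply mul_le_mul _ h2 (abs_nonneg _) (by positivity)
        rw [abs_neg, abs_two]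
        exact mul_le_mul_of_nonneg_left h1 (by norm_num)
    _ = |u - v| := by rw [abs_div, abs_two]; ring

lemma abs_cos_sub_cos2 (u v : ℝ) : |Real.cos u - Real.cos v| ≤ 2 := by
  calc |Real.cos u - Real.cos v| ≤ |Real.cos u| + |Real.cos v| := abs_sub _ _
    _ ≤ 1 + 1 := add_le_add (Real.abs_cos_le_one _) (Real.abs_cos_le_one _)
    _ = 2 := by norm_num

lemma abs_tsum_le' (f : ℕ → ℝ) (h : Summable fun k => |f k|) :
    |∑' k, f k| ≤ ∑' k, |f k| := by
  have h' : Summable fun k => ‖f k‖ := by simpa [Real.norm_eq_abs] using h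
  simpa [Real.norm_eq_abs] using norm_tsum_le_tsum_norm (f := f) h'

lemma tsum_tail_bound (a : ℝ) (ha0 : 0 < a) (ha1 : a < 1) (f : ℕ → ℝ)
    (hfs : Summable f) (hbd : ∀ k, |f k| ≤ 2 * a ^ k) (N : ℕ) :
    |∑' k, f (k + N)| ≤ 2 * a ^ N / (1 - a) := by
  have hsumg : Summable (fun k : ℕ => a ^ k) := summable_geometric_of_lt_one ha0.le ha1
  have hfsN : Summable (fun k => f (k + N)) := (summable_nat_add_iff N).mpr hfs
  have hbnd : Summable (fun k : ℕ => 2 * a ^ (k + N)) := by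
    apply Summable.mul_left
    exact (summable_nat_add_iff N).mpr hsumg
  calc |∑' k, f (k + N)| ≤ ∑' k, |f (k + N)| := abs_tsum_le' _ hfsN.abs
    _ ≤ ∑' k : ℕ, 2 * a ^ (k + N) := Summable.tsum_le_tsum (fun k => hbd _) hfsN.abs hbnd
    _ = 2 * a ^ N * (1 - a)⁻¹ := by
        have h2 : ∀ k : ℕ, 2 * a ^ (k + N) = (2 * a ^ N) * a ^ k := by
          intro k; rw [pow_add]; ring
        simp_rw [h2]
        rw [tsum_mul_left, tsum_geometric_of_lt_one ha0.le ha1]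
    _ = 2 * a ^ N / (1 - a) := by rw [div_eq_mul_inv]

set_option maxHeartbeats 1000000 in
/-- For `0 < a < 1`, integer `b ≥ 2` with `ab > 1`, the Weierstrass
function `W(x) = Σ a^k cos(b^k π x)` is Hölder continuous with exponent `−log a / log b`. -/
theorem stmt1 (a : ℝ) (ha0 : 0 < a) (ha1 : a < 1) (b : ℕ) (hb : 2 ≤ b)
    (hab : 1 < a * b) :
    ∃ C > 0, ∀ x y : ℝ,
      |(∑' k : ℕ, a ^ k * Real.cos ((b : ℝ) ^ k * Real.pi * x)) -
        ∑' k : ℕ, a ^ k * Real.cos ((b : ℝ) ^ k * Real.pi * y)| ≤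
      C * |x - y| ^ (-Real.log a / Real.log b) := by
  have hb1 : (1 : ℝ) < b := by exact_mod_cast Nat.lt_of_lt_of_le one_lt_two hb
  have hb0 : (0 : ℝ) < b := lt_trans one_pos hb1
  have hlogb : 0 < Real.log b := Real.log_pos hb1
  have hloga : Real.log a < 0 := Real.log_neg ha0 ha1
  set s : ℝ := -Real.log a / Real.log b with hs
  have hs0 : 0 < s := div_pos (neg_pos.mpr hloga) hlogb
  have hab' : a = (b : ℝ) ^ (-s) := by
    rw [hs, neg_div, neg_neg, Real.rpow_def_of_pos hb0, mul_comm,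
      div_mul_cancel₀ _ (ne_of_gt hlogb), Real.exp_log ha0]
  have habs : ∀ N : ℕ, a ^ N = (((b : ℝ) ^ N)⁻¹) ^ s := by
    intro N
    rw [hab', ← Real.rpow_natCast ((b:ℝ) ^ (-s)) N, ← Real.rpow_mul hb0.le,
      ← Real.rpow_natCast (b:ℝ) N, ← Real.rpow_neg hb0.le, ← Real.rpow_mul hb0.le]
    ring_nf
  set C : ℝ := Real.pi * b / (a * b - 1) + 2 / (1 - a) with hC
  have hC1 : 0 < Real.pi * b / (a * b - 1) := by
    apply div_pos (by positivity) (by linarith)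
  have hC2 : 0 < 2 / (1 - a) := by apply div_pos (by norm_num) (by linarith)
  have hC0 : 0 < C := add_pos hC1 hC2
  refine ⟨C, hC0, fun x y => ?_⟩
  have hsumg : Summable (fun k : ℕ => a ^ k) := summable_geometric_of_lt_one ha0.le ha1
  have hsum : ∀ z : ℝ, Summable (fun k : ℕ => a ^ k * Real.cos ((b : ℝ) ^ k * Real.pi * z)) := by
    intro z
    apply Summable.of_abs
    apply Summable.of_nonneg_of_le (fun k => abs_nonneg _) _ hsumg
    intro k
    rw [abs_mul, abs_pow, abs_of_pos ha0]
    exact mul_le_of_le_one_right (by positivity) (Real.abs_cos_le_one _)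
  set f : ℕ → ℝ := fun k => a ^ k * (Real.cos ((b : ℝ) ^ k * Real.pi * x)
    - Real.cos ((b : ℝ) ^ k * Real.pi * y)) with hf
  have hfs : Summable f := by
    have := (hsum x).sub (hsum y)
    simpa [hf, mul_sub] using this
  have hdiff : (∑' k : ℕ, a ^ k * Real.cos ((b : ℝ) ^ k * Real.pi * x)) -
      (∑' k : ℕ, a ^ k * Real.cos ((b : ℝ) ^ k * Real.pi * y)) = ∑' k, f k := by
    rw [← Summable.tsum_sub (hsum x) (hsum y)]
    congr 1; ext k; rw [hf]; ring
  rw [hdiff]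
  set d : ℝ := |x - y| with hd
  have hd0 : 0 ≤ d := abs_nonneg _
  have hfb1 : ∀ k, |f k| ≤ 2 * a ^ k := by
    intro k
    rw [hf, abs_mul, abs_pow, abs_of_pos ha0, mul_comm]
    exact mul_le_mul_of_nonneg_right (abs_cos_sub_cos2 _ _) (by positivity)
  have hfb2 : ∀ k, |f k| ≤ Real.pi * (a * b) ^ k * d := by
    intro k
    rw [hf, abs_mul, abs_pow, abs_of_pos ha0]
    have h3 : |Real.cos ((b : ℝ) ^ k * Real.pi * x) - Real.cos ((b : ℝ) ^ k * Real.pi * y)|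
        ≤ (b : ℝ) ^ k * Real.pi * d := by
      calc _ ≤ |(b : ℝ) ^ k * Real.pi * x - (b : ℝ) ^ k * Real.pi * y| :=
              abs_cos_sub_cos' _ _
        _ = (b : ℝ) ^ k * Real.pi * d := by
              rw [hd, ← mul_sub, abs_mul, abs_of_pos (by positivity)]
    calc a ^ k * |Real.cos ((b : ℝ) ^ k * Real.pi * x) - Real.cos ((b : ℝ) ^ k * Real.pi * y)|
        ≤ a ^ k * ((b : ℝ) ^ k * Real.pi * d) :=
          mul_le_mul_of_nonneg_left h3 (by positivity)
      _ = Real.pi * (a * b) ^ k * d := by rw [mul_pow]; ring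
  have htail : ∀ N : ℕ, |∑' k, f (k + N)| ≤ 2 * a ^ N / (1 - a) :=
    tsum_tail_bound a ha0 ha1 f hfs hfb1
  have hhead : ∀ N : ℕ, |∑ k ∈ range N, f k| ≤ Real.pi * (a * b) ^ N / (a * b - 1) * d := by
    intro N
    calc |∑ k ∈ range N, f k| ≤ ∑ k ∈ range N, |f k| := Finset.abs_sum_le_sum_abs _ _
      _ ≤ ∑ k ∈ range N, Real.pi * (a * b) ^ k * d := Finset.sum_le_sum (fun k _ => hfb2 k)
      _ = Real.pi * d * ∑ k ∈ range N, (a * b) ^ k := by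
          rw [Finset.mul_sum]; congr 1; ext k; ring
      _ ≤ Real.pi * d * ((a * b) ^ N / (a * b - 1)) := by
          apply mul_le_mul_of_nonneg_left _ (by positivity)
          rw [geom_sum_eq (ne_of_gt hab)]
          apply div_le_div_of_nonneg_right _ (by linarith)
          · linarith
      _ = Real.pi * (a * b) ^ N / (a * b - 1) * d := by ring
  have key : ∀ N : ℕ, |∑' k, f k| ≤
      Real.pi * (a * b) ^ N / (a * b - 1) * d + 2 * a ^ N / (1 - a) := by
    intro N
    rw [← hfs.sum_add_tsum_nat_add N]
    calc |∑ k ∈ range N, f k + ∑' k, f (k + N)|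
        ≤ |∑ k ∈ range N, f k| + |∑' k, f (k + N)| := abs_add_le _ _
      _ ≤ _ := add_le_add (hhead N) (htail N)
  rcases eq_or_lt_of_le hd0 with hdz | hdpos
  · -- d = 0, x = y
    have hxy : x = y := by
      have h0 := abs_eq_zero.mp hdz.symm
      linarith [sub_eq_zero.mp h0]
    subst hxy
    have hfz : f = fun _ => (0:ℝ) := by funext k; simp [hf]
    rw [hfz, tsum_zero, ← hdz, Real.zero_rpow (ne_of_gt hs0)]
    simp
  rcases le_or_gt 1 d with hd1 | hd1
  · -- d ≥ 1
    have h1 : |∑' k, f k| ≤ 2 / (1 - a) := by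
      have := htail 0
      simpa using this
    have h2 : (1:ℝ) ≤ d ^ s := Real.one_le_rpow hd1 hs0.le
    calc |∑' k, f k| ≤ 2 / (1 - a) := h1
      _ = 2 / (1 - a) * 1 := by ring
      _ ≤ C * d ^ s := by
          apply mul_le_mul _ h2 (by norm_num) hC0.le
          rw [hC]; linarith
  · -- 0 < d < 1
    have hex : ∃ n : ℕ, 1/d < (b:ℝ)^n := pow_unbounded_of_one_lt (1/d) hb1
    set N := Nat.find hex with hN
    have hNspec : 1/d < (b:ℝ)^N := Nat.find_spec hex
    have hNpos : 0 < N := by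
      rcases Nat.eq_zero_or_pos N with h | h
      · exfalso
        rw [h, pow_zero] at hNspec
        have : 1 < d := by
          rw [div_lt_one hdpos] at hNspec; linarith
        linarith
      · exact h
    have hNmin : ¬ (1/d < (b:ℝ)^(N-1)) := Nat.find_min hex (Nat.sub_lt hNpos one_pos)
    push_neg at hNmin
    have hbNd : (b:ℝ)^N * d ≤ b := by
      have h4 : (b:ℝ)^N = b * (b:ℝ)^(N-1) := by
        rw [← pow_succ']
        congr 1
        omega
      rw [h4]
      have h5 : (b:ℝ)^(N-1) * d ≤ 1 := by
        rw [le_div_iff₀ hdpos] at hNmin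
        exact hNmin
      calc (b:ℝ) * (b:ℝ)^(N-1) * d = (b:ℝ) * ((b:ℝ)^(N-1) * d) := by ring
        _ ≤ (b:ℝ) * 1 := mul_le_mul_of_nonneg_left h5 hb0.le
        _ = b := by ring
    have haN : a ^ N ≤ d ^ s := by
      rw [habs N]
      apply Real.rpow_le_rpow (by positivity) _ hs0.le
      rw [inv_le_comm₀ (by positivity) hdpos, ← one_div]
      exact hNspec.le
    calc |∑' k, f k| ≤ Real.pi * (a * b) ^ N / (a * b - 1) * d + 2 * a ^ N / (1 - a) := key N
      _ = Real.pi / (a * b - 1) * (a ^ N * ((b:ℝ)^N * d)) + 2 / (1 - a) * a ^ N := by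
          rw [mul_pow]; ring
      _ ≤ Real.pi / (a * b - 1) * (a ^ N * b) + 2 / (1 - a) * a ^ N := by
          have hp : 0 ≤ Real.pi / (a * b - 1) := by
            apply div_nonneg Real.pi_pos.le; linarith
          apply add_le_add_left
          apply mul_le_mul_of_nonneg_left _ hp
          exact mul_le_mul_of_nonneg_left hbNd (by positivity)
      _ = C * a ^ N := by rw [hC]; ring
      _ ≤ C * d ^ s := mul_le_mul_of_nonneg_left haN hC0.le
end

section
/- Let X be a Banach space with a Schauder basis (eₙ) and let fₙ : D → ℂ be holomorphic on an open disc D ⊆ ℂ. Suppose that for each λ ∈ D the series F(λ) = Σₙ fₙ(λ) eₙ converges in X and that F is bounded on every compact subset of D. Then F : D → X is holomorphic. -/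
open Filter

open Filter Metric BoundedContinuousFunction

/-- Uniform bound on partial sums of basis expansions (basis constant), obtained by
realizing the space of convergent partial-sum sequences as a Banach space and applying
the open mapping theorem. -/
lemma stmt14_bound {X : Type*} [NormedAddCommGroup X] [NormedSpace ℂ X] [CompleteSpace X]
    (e : ℕ → X)
    (hbasis : ∀ x : X, ∃! a : ℕ → ℂ,
      Tendsto (fun N => ∑ n ∈ Finset.range N, a n • e n) atTop (nhds x)) :
    ∃ C : ℝ, 0 ≤ C ∧ ∀ (a : ℕ → ℂ) (x : X),
      Tendsto (fun N => ∑ n ∈ Finset.range N, a n • e n) atTop (nhds x) →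
      ∀ N, ‖∑ n ∈ Finset.range N, a n • e n‖ ≤ C * ‖x‖ := by
  classical
  -- the submodule of `ℕ →ᵇ X` of partial-sum sequences
  set p : Submodule ℂ (ℕ →ᵇ X) :=
    { carrier := {s | s 0 = 0 ∧ (∀ N, s (N + 1) - s N ∈ Submodule.span ℂ {e N}) ∧ CauchySeq ⇑s}
      add_mem' := by
        rintro s t ⟨hs0, hsd, hsc⟩ ⟨ht0, htd, htc⟩
        refine ⟨by simp [hs0, ht0], fun N => ?_, by simpa using hsc.add htc⟩
        have : (s + t) (N + 1) - (s + t) N = (s (N + 1) - s N) + (t (N + 1) - t N) := by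
          simp only [BoundedContinuousFunction.coe_add, Pi.add_apply]; abel
        rw [this]; exact add_mem (hsd N) (htd N)
      zero_mem' := by
        refine ⟨rfl, fun N => by simp, ?_⟩
        exact (tendsto_const_nhds (x := (0 : X)) (f := atTop (α := ℕ))).cauchySeq
      smul_mem' := by
        rintro c s ⟨hs0, hsd, hsc⟩
        refine ⟨by simp [hs0], fun N => ?_, ?_⟩
        · have : (c • s) (N + 1) - (c • s) N = c • (s (N + 1) - s N) := by
            simp only [BoundedContinuousFunction.coe_smul, Pi.smul_apply, smul_sub]
          rw [this]; exact Submodule.smul_mem _ c (hsd N)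
        · simpa using (hsc.tendsto_limUnder.const_smul c).cauchySeq } with hp
  have hmemdef : ∀ s : ℕ →ᵇ X, s ∈ p ↔
      (s 0 = 0 ∧ (∀ N, s (N + 1) - s N ∈ Submodule.span ℂ {e N}) ∧ CauchySeq ⇑s) := by
    intro s; rfl
  -- `p` is closed
  have hclosed : IsClosed (p : Set (ℕ →ᵇ X)) := by
    have h1 : IsClosed {s : ℕ →ᵇ X | s 0 = 0} := by
      have : {s : ℕ →ᵇ X | s 0 = 0} =
          (BoundedContinuousFunction.evalCLM ℂ (0 : ℕ)) ⁻¹' {0} := rfl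
      rw [this]
      exact isClosed_singleton.preimage (BoundedContinuousFunction.evalCLM ℂ (0 : ℕ)).continuous
    have h2 : IsClosed {s : ℕ →ᵇ X | ∀ N, s (N + 1) - s N ∈ Submodule.span ℂ {e N}} := by
      have : {s : ℕ →ᵇ X | ∀ N, s (N + 1) - s N ∈ Submodule.span ℂ {e N}} =
          ⋂ N, (fun s : ℕ →ᵇ X => s (N + 1) - s N) ⁻¹' (Submodule.span ℂ {e N} : Set X) := by
        ext s; simp
      rw [this]
      refine isClosed_iInter fun N => ?_
      exact ((Submodule.span ℂ {e N}).closed_of_finiteDimensional).preimage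
        (((BoundedContinuousFunction.evalCLM ℂ (N + 1)).continuous).sub
          ((BoundedContinuousFunction.evalCLM ℂ N).continuous))
    have h3 : IsClosed {s : ℕ →ᵇ X | CauchySeq ⇑s} := by
      refine isClosed_of_closure_subset fun s hs => ?_
      show CauchySeq ⇑s
      rw [Metric.cauchySeq_iff]
      intro ε hε
      obtain ⟨t, ht, hts⟩ := Metric.mem_closure_iff.1 hs (ε / 3) (by positivity)
      obtain ⟨N, hN⟩ := Metric.cauchySeq_iff.1 ht (ε / 3) (by positivity)
      refine ⟨N, fun m hm n hn => ?_⟩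
      have h1 : dist (s m) (t m) < ε / 3 := (dist_coe_le_dist m).trans_lt hts
      have h2 : dist (t n) (s n) < ε / 3 := by
        rw [dist_comm]; exact (dist_coe_le_dist n).trans_lt hts
      calc dist (s m) (s n)
          ≤ dist (s m) (t m) + dist (t m) (t n) + dist (t n) (s n) := dist_triangle4 _ _ _ _
        _ < ε / 3 + ε / 3 + ε / 3 := by
            have := hN m hm n hn; linarith
        _ = ε := by ring
    have : (p : Set (ℕ →ᵇ X)) =
        {s : ℕ →ᵇ X | s 0 = 0} ∩ ({s | ∀ N, s (N + 1) - s N ∈ Submodule.span ℂ {e N}}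
          ∩ {s | CauchySeq ⇑s}) := by
      ext s
      simp only [Set.mem_inter_iff, Set.mem_setOf_eq, SetLike.mem_coe, hmemdef]
    rw [this]
    exact h1.inter (h2.inter h3)
  haveI : CompleteSpace p := hclosed.completeSpace_coe
  -- the limit map `T : p → X`
  have hT0 : ∀ s : p, Tendsto ⇑(s : ℕ →ᵇ X) atTop (nhds (limUnder atTop ⇑(s : ℕ →ᵇ X))) :=
    fun s => s.2.2.2.tendsto_limUnder
  let Tlin : p →ₗ[ℂ] X :=
    { toFun := fun s => limUnder atTop ⇑(s : ℕ →ᵇ X)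
      map_add' := fun s t => tendsto_nhds_unique (hT0 (s + t))
        (by simpa [Pi.add_def] using (hT0 s).add (hT0 t))
      map_smul' := fun c s => tendsto_nhds_unique (hT0 (c • s))
        (by simpa using (hT0 s).const_smul c) }
  have hTlin : ∀ s : p, Tendsto ⇑(s : ℕ →ᵇ X) atTop (nhds (Tlin s)) := hT0
  let T : p →L[ℂ] X := Tlin.mkContinuous 1 fun s => by
    rw [one_mul]
    refine le_of_tendsto ((continuous_norm.tendsto _).comp (hTlin s))
      (Eventually.of_forall fun N => ?_)
    exact BoundedContinuousFunction.norm_coe_le_norm _ N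
  have hTs : ∀ s : p, Tendsto ⇑(s : ℕ →ᵇ X) atTop (nhds (T s)) := hT0
  -- construction of elements of `p` from convergent expansions
  have hmk : ∀ (a : ℕ → ℂ) (x : X),
      Tendsto (fun N => ∑ n ∈ Finset.range N, a n • e n) atTop (nhds x) →
      ∃ s : p, (∀ N, (s : ℕ →ᵇ X) N = ∑ n ∈ Finset.range N, a n • e n) ∧ T s = x := by
    intro a x ha
    obtain ⟨Cb, hCb⟩ := ha.norm.bddAbove_range
    have hCb' : ∀ N, ‖∑ n ∈ Finset.range N, a n • e n‖ ≤ Cb := fun N =>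
      hCb (Set.mem_range_self N)
    let s₀ : ℕ →ᵇ X := BoundedContinuousFunction.ofNormedAddCommGroupDiscrete
      (fun N => ∑ n ∈ Finset.range N, a n • e n) Cb hCb'
    have hs₀ : ∀ N, s₀ N = ∑ n ∈ Finset.range N, a n • e n := fun _ => rfl
    have hmem : s₀ ∈ p := by
      rw [hmemdef]
      refine ⟨by simp [hs₀], fun N => ?_, ?_⟩
      · rw [hs₀, hs₀, Finset.sum_range_succ]
        refine Submodule.mem_span_singleton.2 ⟨a N, ?_⟩
        abel
      · exact (by rw [show ⇑s₀ = _ from funext hs₀]; exact ha : Tendsto ⇑s₀ atTop (nhds x)).cauchySeq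
    refine ⟨⟨s₀, hmem⟩, hs₀, ?_⟩
    exact tendsto_nhds_unique (hTs ⟨s₀, hmem⟩) (by rw [show ⇑s₀ = _ from funext hs₀]; exact ha)
  -- T is bijective
  have hker : T.ker = ⊥ := by
    rw [LinearMap.ker_eq_bot']
    intro s hs
    have hs0 : Tendsto ⇑(s : ℕ →ᵇ X) atTop (nhds (0 : X)) := by
      have := hTs s; rwa [show T s = 0 from hs] at this
    choose c hc using fun N => Submodule.mem_span_singleton.1 (s.2.2.1 N)
    have hsum : ∀ N, ∑ n ∈ Finset.range N, c n • e n = (s : ℕ →ᵇ X) N := by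
      intro N
      induction N with
      | zero => simp [s.2.1]
      | succ N ih => rw [Finset.sum_range_succ, ih, hc N]; abel
    obtain ⟨b, hb, hu⟩ := hbasis 0
    have h1 : c = b := hu c (by
      show Tendsto (fun N => ∑ n ∈ Finset.range N, c n • e n) atTop (nhds 0)
      have heq : (fun N => ∑ n ∈ Finset.range N, c n • e n) = ⇑(s : ℕ →ᵇ X) := funext hsum
      rw [heq]; exact hs0)
    have h2 : (fun _ => (0 : ℂ)) = b := hu _ (by simpa using tendsto_const_nhds)
    have hc0 : ∀ n, c n = 0 := fun n => by rw [h1, ← h2]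
    have hz : ∀ N, (s : ℕ →ᵇ X) N = 0 := by
      intro N
      rw [← hsum]
      exact Finset.sum_eq_zero fun n _ => by rw [hc0 n, zero_smul]
    ext N
    exact hz N
  have hrange : T.range = ⊤ := by
    rw [LinearMap.range_eq_top]
    intro x
    obtain ⟨a, ha, -⟩ := hbasis x
    obtain ⟨s, -, hTsx⟩ := hmk a x ha
    exact ⟨s, hTsx⟩
  let equiv := ContinuousLinearEquiv.ofBijective T hker hrange
  refine ⟨‖(equiv.symm : X →L[ℂ] p)‖, norm_nonneg _, fun a x ha N => ?_⟩
  obtain ⟨s, hsN, hTsx⟩ := hmk a x ha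
  have hseq : s = equiv.symm x := by
    apply equiv.injective
    rw [equiv.apply_symm_apply]
    exact hTsx
  calc ‖∑ n ∈ Finset.range N, a n • e n‖
      = ‖(s : ℕ →ᵇ X) N‖ := by rw [hsN]
    _ ≤ ‖(s : ℕ →ᵇ X)‖ := BoundedContinuousFunction.norm_coe_le_norm _ N
    _ = ‖s‖ := rfl
    _ = ‖equiv.symm x‖ := by rw [hseq]
    _ ≤ ‖(equiv.symm : X →L[ℂ] p)‖ * ‖x‖ := (equiv.symm : X →L[ℂ] p).le_opNorm x

/-- Let `X` be a Banach space with a Schauder basis `(eₙ)`, let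
`fₙ : D → ℂ` be holomorphic on an open disc `D`, suppose that for each `λ ∈ D` the
series `F(λ) = Σₙ fₙ(λ) eₙ` converges in `X` (in the ordered, partial-sum sense), and
that `F` is bounded on every compact subset of `D`. Then `F : D → X` is holomorphic. -/
theorem stmt14 {X : Type*} [NormedAddCommGroup X] [NormedSpace ℂ X] [CompleteSpace X]
    (e : ℕ → X)
    (hbasis : ∀ x : X, ∃! a : ℕ → ℂ,
      Tendsto (fun N => ∑ n ∈ Finset.range N, a n • e n) atTop (nhds x))
    (z₀ : ℂ) (r : ℝ) (hr : 0 < r)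
    (f : ℕ → ℂ → ℂ) (hf : ∀ n, DifferentiableOn ℂ (f n) (Metric.ball z₀ r))
    (F : ℂ → X)
    (hconv : ∀ w ∈ Metric.ball z₀ r,
      Tendsto (fun N => ∑ n ∈ Finset.range N, f n w • e n) atTop (nhds (F w)))
    (hbdd : ∀ K ⊆ Metric.ball z₀ r, IsCompact K → ∃ M : ℝ, ∀ w ∈ K, ‖F w‖ ≤ M) :
    DifferentiableOn ℂ F (Metric.ball z₀ r) := by
  classical
  obtain ⟨C, hC0, hCb⟩ := stmt14_bound e hbasis
  set S : ℕ → ℂ → X := fun N w => ∑ n ∈ Finset.range N, f n w • e n with hSdef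
  have hSdiff : ∀ N, DifferentiableOn ℂ (S N) (Metric.ball z₀ r) := by
    intro N
    apply DifferentiableOn.fun_sum
    intro n _
    exact (hf n).smul_const (e n)
  intro z hz
  have hz' : dist z z₀ < r := Metric.mem_ball.1 hz
  set R : ℝ := (r - dist z z₀) / 2 with hRdef
  have hRpos : 0 < R := by
    have : 0 < r - dist z z₀ := by linarith
    positivity
  have hsub : Metric.closedBall z R ⊆ Metric.ball z₀ r := by
    intro ζ hζ
    have h1 : dist ζ z ≤ R := Metric.mem_closedBall.1 hζ
    have h2 : dist ζ z₀ ≤ dist ζ z + dist z z₀ := dist_triangle ζ z z₀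
    have : R < r - dist z z₀ := by rw [hRdef]; linarith
    exact Metric.mem_ball.2 (by linarith)
  obtain ⟨M, hM⟩ := hbdd (Metric.closedBall z R) hsub (isCompact_closedBall z R)
  have hM0 : 0 ≤ M := (norm_nonneg _).trans (hM z (Metric.mem_closedBall_self hRpos.le))
  have hSbound : ∀ ζ ∈ Metric.closedBall z R, ∀ N, ‖S N ζ‖ ≤ C * M := fun ζ hζ N =>
    (hCb _ _ (hconv ζ (hsub hζ)) N).trans (mul_le_mul_of_nonneg_left (hM ζ hζ) hC0)
  have hmap : ∀ θ : ℝ, circleMap z R θ ∈ Metric.closedBall z R := fun θ =>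
    circleMap_mem_closedBall z hRpos.le θ
  have hFtend : ∀ θ : ℝ, Tendsto (fun N => S N (circleMap z R θ)) atTop
      (nhds (F (circleMap z R θ))) := fun θ => hconv _ (hsub (hmap θ))
  -- continuity of partial sums along the circle
  have hScont : ∀ N, Continuous fun θ : ℝ => S N (circleMap z R θ) := by
    intro N
    have : ContinuousOn (S N) (Metric.ball z₀ r) := (hSdiff N).continuousOn
    exact this.comp_continuous (continuous_circleMap z R) fun θ => hsub (hmap θ)
  -- F is circle integrable
  have hFmeas : MeasureTheory.AEStronglyMeasurable (fun θ : ℝ => F (circleMap z R θ))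
      MeasureTheory.volume :=
    aestronglyMeasurable_of_tendsto_ae atTop
      (fun N => (hScont N).aestronglyMeasurable)
      (MeasureTheory.ae_of_all _ hFtend)
  have hFi : CircleIntegrable F z R := by
    show IntervalIntegrable (fun θ => F (circleMap z R θ)) MeasureTheory.volume 0 (2 * Real.pi)
    rw [intervalIntegrable_iff]
    apply MeasureTheory.Measure.integrableOn_of_bounded (M := M)
    · rw [Set.uIoc]
      exact measure_Ioc_lt_top.ne
    · exact hFmeas
    · exact MeasureTheory.ae_of_all _ fun θ => hM _ (hmap θ)
  -- Cauchy integral formula for F on the circle, by dominated convergence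
  have hkey : ∀ w ∈ Metric.ball z R,
      F w = (2 * Real.pi * Complex.I : ℂ)⁻¹ • ∮ ζ in C(z, R), (ζ - w)⁻¹ • F ζ := by
    intro w hw
    have hwz : dist w z < R := Metric.mem_ball.1 hw
    have hd : 0 < R - dist w z := by linarith
    have hdist : ∀ θ : ℝ, R - dist w z ≤ ‖circleMap z R θ - w‖ := by
      intro θ
      have h1 : dist (circleMap z R θ) z = R := by
        simpa using Metric.mem_sphere.1 (circleMap_mem_sphere z hRpos.le θ)
      have h2 : dist (circleMap z R θ) z ≤ dist (circleMap z R θ) w + dist w z :=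
        dist_triangle _ _ _
      rw [← dist_eq_norm]
      linarith
    have hne : ∀ θ : ℝ, circleMap z R θ - w ≠ 0 := by
      intro θ h
      have := hdist θ
      rw [h, norm_zero] at this
      linarith
    have hSN : ∀ N, (∮ ζ in C(z, R), (ζ - w)⁻¹ • S N ζ)
        = (2 * Real.pi * Complex.I : ℂ) • S N w := fun N =>
      DifferentiableOn.circleIntegral_sub_inv_smul ((hSdiff N).mono hsub) hw
    have hDCT : Tendsto (fun N => ∮ ζ in C(z, R), (ζ - w)⁻¹ • S N ζ) atTop
        (nhds (∮ ζ in C(z, R), (ζ - w)⁻¹ • F ζ)) := by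
      show Tendsto (fun N => ∫ θ in (0)..2 * Real.pi,
          deriv (circleMap z R) θ • ((circleMap z R θ - w)⁻¹ • S N (circleMap z R θ))) atTop
        (nhds (∫ θ in (0)..2 * Real.pi,
          deriv (circleMap z R) θ • ((circleMap z R θ - w)⁻¹ • F (circleMap z R θ))))
      apply intervalIntegral.tendsto_integral_filter_of_dominated_convergence
        (bound := fun _ => R * ((R - dist w z)⁻¹ * (C * M)))
      · refine Eventually.of_forall fun N => Continuous.aestronglyMeasurable ?_
        refine Continuous.smul ?_ (Continuous.smul ?_ (hScont N))
        · have hc : Continuous fun θ : ℝ => circleMap 0 R θ * Complex.I :=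
            (continuous_circleMap 0 R).mul continuous_const
          exact hc.congr fun θ => (deriv_circleMap z R θ).symm
        · exact ((continuous_circleMap z R).sub continuous_const).inv₀ hne
      · refine Eventually.of_forall fun N => MeasureTheory.ae_of_all _ fun θ _ => ?_
        rw [norm_smul, norm_smul]
        have h1 : ‖deriv (circleMap z R) θ‖ = R := by
          simp [deriv_circleMap, abs_of_pos hRpos]
        have h2 : ‖(circleMap z R θ - w)⁻¹‖ ≤ (R - dist w z)⁻¹ := by
          rw [norm_inv]
          exact inv_anti₀ hd (hdist θ)
        rw [h1]
        have h3 : ‖S N (circleMap z R θ)‖ ≤ C * M := hSbound _ (hmap θ) N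
        have h4 : 0 ≤ C * M := mul_nonneg hC0 hM0
        refine mul_le_mul_of_nonneg_left ?_ hRpos.le
        exact mul_le_mul h2 h3 (norm_nonneg _) (inv_nonneg.2 hd.le)
      · exact intervalIntegrable_const
      · refine MeasureTheory.ae_of_all _ fun θ _ => ?_
        exact ((hFtend θ).const_smul _).const_smul _
    have hlim : Tendsto (fun N => (2 * Real.pi * Complex.I : ℂ) • S N w) atTop
        (nhds ((2 * Real.pi * Complex.I : ℂ) • F w)) :=
      (hconv w (hsub (Metric.ball_subset_closedBall hw))).const_smul _
    have heq : (2 * Real.pi * Complex.I : ℂ) • F w = ∮ ζ in C(z, R), (ζ - w)⁻¹ • F ζ := by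
      refine tendsto_nhds_unique ?_ hDCT
      simpa only [hSN] using hlim
    rw [← heq, smul_smul, inv_mul_cancel₀ Complex.two_pi_I_ne_zero, one_smul]
  -- conclude differentiability at z
  set R' : NNReal := ⟨R, hRpos.le⟩ with hR'def
  have hG := hasFPowerSeriesOn_cauchy_integral (f := F) (c := z) (R := R') hFi
    (by exact_mod_cast hRpos)
  have hGanalytic : AnalyticAt ℂ
      (fun w => (2 * Real.pi * Complex.I : ℂ)⁻¹ • ∮ ζ in C(z, R'), (ζ - w)⁻¹ • F ζ) z :=
    hG.analyticAt
  have hFeq : F =ᶠ[nhds z]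
      (fun w => (2 * Real.pi * Complex.I : ℂ)⁻¹ • ∮ ζ in C(z, R'), (ζ - w)⁻¹ • F ζ) :=
    Filter.eventuallyEq_of_mem (Metric.ball_mem_nhds z hRpos) hkey
  exact (hFeq.differentiableAt_iff.2 hGanalytic.differentiableAt).differentiableWithinAt
end

section
/- Let T be a bounded operator on a Hilbert space L²(μ) which is a left inverse of the Koopman operator of a μ-preserving map F (i.e. T(ψ∘F) = ψ), and suppose T has spectral gap on a subspace containing ψ so that w = Σ_{k=1}^∞ T^k ψ converges. Then h = ψ − (w∘F − w) lies in ker T, and consequently ∫ h · (u∘F) dμ = 0 for every u ∈ L²(μ). -/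
open MeasureTheory

/-- Let `F` preserve `μ`, let `U` be the Koopman operator
`u ↦ u ∘ F` on `L²(μ)`, and let `T` be a bounded left inverse of `U`
(`T(ψ∘F) = ψ`) which is the transfer-operator adjoint of `U`
(`∫ (Tφ)·u dμ = ∫ φ·(u∘F) dμ`). If `w = Σ_{k≥1} T^k ψ` converges, then
`h = ψ − (w∘F − w)` lies in `ker T`, and `∫ h·(u∘F) dμ = 0` for every `u ∈ L²(μ)`. -/
theorem stmt15 {α : Type*} [MeasurableSpace α] (μ : Measure α) [IsProbabilityMeasure μ]
    (F : α → α) (hF : MeasurePreserving F μ μ)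
    (U T : Lp ℝ 2 μ →L[ℝ] Lp ℝ 2 μ)
    (hU : ∀ u : Lp ℝ 2 μ, (U u : α → ℝ) =ᵐ[μ] fun a => (u : α → ℝ) (F a))
    (hTU : ∀ ψ : Lp ℝ 2 μ, T (U ψ) = ψ)
    (hadj : ∀ φ u : Lp ℝ 2 μ,
      ∫ a, (T φ : α → ℝ) a * (u : α → ℝ) a ∂μ =
        ∫ a, (φ : α → ℝ) a * (u : α → ℝ) (F a) ∂μ)
    (ψ w : Lp ℝ 2 μ)
    (hw : HasSum (fun k : ℕ => (T ^ (k + 1)) ψ) w) :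
    T (ψ - (U w - w)) = 0 ∧
      ∀ u : Lp ℝ 2 μ,
        ∫ a, ((ψ - (U w - w) : Lp ℝ 2 μ) : α → ℝ) a * (u : α → ℝ) (F a) ∂μ = 0 := by
  have hTw : HasSum (fun k : ℕ => T ((T ^ (k + 1)) ψ)) (T w) := T.hasSum hw
  have hTw' : HasSum (fun k : ℕ => (T ^ (k + 1 + 1)) ψ) (T w) := by
    refine hTw.congr_fun fun k => ?_
    rw [pow_succ']
    rfl
  have hshift : HasSum (fun k : ℕ => (T ^ (k + 1 + 1)) ψ) (w - T ψ) := by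
    have h := (hasSum_nat_add_iff' (f := fun k : ℕ => (T ^ (k + 1)) ψ)
      (g := w) (1 : ℕ)).mpr hw
    simpa [Finset.sum_range_one, pow_one] using h
  have hTwEq : T w = w - T ψ := hTw'.unique hshift
  have hker : T (ψ - (U w - w)) = 0 := by
    rw [map_sub, map_sub, hTU w, hTwEq]
    abel
  refine ⟨hker, fun u => ?_⟩
  rw [← hadj (ψ - (U w - w)) u, hker]
  have h0 : ((0 : Lp ℝ 2 μ) : α → ℝ) =ᵐ[μ] 0 := Lp.coeFn_zero ℝ 2 μ
  calc ∫ a, ((0 : Lp ℝ 2 μ) : α → ℝ) a * (u : α → ℝ) a ∂μ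
      = ∫ a, (0 : ℝ) ∂μ := by
        refine integral_congr_ae (h0.mono fun a ha => ?_)
        simp [ha]
    _ = 0 := by simp
end
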